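/- Let G and H be complex Hilbert spaces with G continuously and densely embedded in H, and let G ⊂ H ⊂ G* be the associated Gelfand triplet. Let S ∈ B(G,G*) and suppose that S − z : G → G* is bijective for some z ∈ ℂ (z acting through the embedding of G into G*). Then the operator Ŝ induced by S in H (with domain D(Ŝ) = {u ∈ G : Su ∈ H} and acting as S) is closed and densely defined, z belongs to its resolvent set (Ŝ − z is a bijection of D(Ŝ) onto H with bounded inverse), the Hilbert-space adjoint of Ŝ equals the operator induced in H by the adjoint form S* ∈ B(G,G*), and the domains D(Ŝ) and D(Ŝ*) are dense subspaces of G. -/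

import Mathlib

open ContinuousLinearMap

noncomputable section

/-- The space of continuous antilinear forms on `G` (the "adjoint space" `G*`). -/
abbrev AntiDual (G : Type*) [NormedAddCommGroup G] [NormedSpace ℂ G] : Type _ :=
  G →SL[starRingEnd ℂ] ℂ

/-- Given a continuous embedding `e : G → H` of a normed space into a Hilbert space,
the canonical map `H → G*`, `v ↦ (u ↦ ⟪e u, v⟫)`. -/
def toAntiDual {G H : Type*} [NormedAddCommGroup G] [NormedSpace ℂ G]
    [NormedAddCommGroup H] [InnerProductSpace ℂ H] (e : G →L[ℂ] H) :
    H →L[ℂ] AntiDual G :=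
  LinearMap.mkContinuous
    { toFun := fun v => ((innerSL ℂ).flip v).comp e
      map_add' := fun v w => by ext u; simp
      map_smul' := fun c v => by ext u; simp }
    ‖e‖ (fun v => by
      have hv : ‖(innerSL ℂ).flip v‖ ≤ ‖v‖ :=
        opNorm_le_bound _ (norm_nonneg v)
          (fun u => by simpa [mul_comm] using norm_inner_le_norm (𝕜 := ℂ) u v)
      calc ‖((innerSL ℂ).flip v).comp e‖ ≤ ‖(innerSL ℂ).flip v‖ * ‖e‖ := opNorm_comp_le _ _
      _ ≤ ‖v‖ * ‖e‖ := by gcongr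
      _ = ‖e‖ * ‖v‖ := mul_comm _ _)

/-- Precomposition with `D : G →L E`, as a map `E* →L G*`; this is the adjoint `D*`. -/
def precompAntiDual {G E : Type*} [NormedAddCommGroup G] [NormedSpace ℂ G]
    [NormedAddCommGroup E] [NormedSpace ℂ E] (D : G →L[ℂ] E) :
    AntiDual E →L[ℂ] AntiDual G :=
  LinearMap.mkContinuous
    { toFun := fun w => w.comp D
      map_add' := fun w₁ w₂ => by ext u; simp
      map_smul' := fun c w => by ext u; simp }
    ‖D‖ (fun w => by
      calc ‖w.comp D‖ ≤ ‖w‖ * ‖D‖ := opNorm_comp_le _ _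
      _ = ‖D‖ * ‖w‖ := mul_comm _ _)

/-- Auxiliary: the antilinear form `u ↦ conj ⟨v, a u⟩`. -/
def adjointFormAux {E : Type*} [NormedAddCommGroup E] [NormedSpace ℂ E]
    (a : E →L[ℂ] AntiDual E) (v : E) : AntiDual E :=
  LinearMap.mkContinuous
    { toFun := fun u => starRingEnd ℂ (a u v)
      map_add' := fun u₁ u₂ => by simp
      map_smul' := fun c u => by simp }
    (‖a‖ * ‖v‖) (fun u => by
      simp only [LinearMap.coe_mk, AddHom.coe_mk]
      calc ‖starRingEnd ℂ (a u v)‖ = ‖a u v‖ := by simp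
      _ ≤ ‖a u‖ * ‖v‖ := (a u).le_opNorm v
      _ ≤ (‖a‖ * ‖u‖) * ‖v‖ := by gcongr; exact a.le_opNorm u
      _ = ‖a‖ * ‖v‖ * ‖u‖ := by ring)

theorem adjointFormAux_norm_le {E : Type*} [NormedAddCommGroup E] [NormedSpace ℂ E]
    (a : E →L[ℂ] AntiDual E) (v : E) : ‖adjointFormAux a v‖ ≤ ‖a‖ * ‖v‖ :=
  LinearMap.mkContinuous_norm_le _ (mul_nonneg (norm_nonneg a) (norm_nonneg v)) _

@[simp] theorem adjointFormAux_apply {E : Type*} [NormedAddCommGroup E] [NormedSpace ℂ E]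
    (a : E →L[ℂ] AntiDual E) (v u : E) :
    adjointFormAux a v u = starRingEnd ℂ (a u v) := rfl

/-- The adjoint form `a* ∈ B(E,E*)` of `a ∈ B(E,E*)`: `⟨u, a* v⟩ = conj ⟨v, a u⟩`. -/
def adjointForm {E : Type*} [NormedAddCommGroup E] [NormedSpace ℂ E]
    (a : E →L[ℂ] AntiDual E) : E →L[ℂ] AntiDual E :=
  LinearMap.mkContinuous
    { toFun := fun v => adjointFormAux a v
      map_add' := fun v w => by ext u; simp
      map_smul' := fun c v => by ext u; simp }
    ‖a‖ (fun v => adjointFormAux_norm_le a v)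

open scoped ComplexConjugate InnerProductSpace

/-!
Put `A = S - z` and let `ι : H → G*` be the Gelfand map. By the bounded inverse theorem,
`e ∘ A⁻¹ ∘ ι` is a bounded two-sided inverse of `Ŝ - z`, so `Ŝ` is closed and `z ∈ ρ(Ŝ)`. In `G`,
the domain of `Ŝ` is `A⁻¹(ι H)`, which is dense since `A` is a homeomorphism and `ι` has dense
range (dually to the injectivity of `e`). The operator `Ŝ'` induced by `S*` is a formal adjoint
of `Ŝ`, so `Ŝ' ⊆ Ŝ*`. Since `A* = S* - z̄` is again bijective (Riesz), `Ŝ' - z̄` is onto, while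
`Ŝ* - z̄` is injective because `Ŝ - z` is onto; hence `Ŝ' = Ŝ*`.
-/

namespace LinearPMap

theorem isClosed_of_resolvent {𝕜 E : Type*} [NormedField 𝕜] [NormedAddCommGroup E]
    [NormedSpace 𝕜 E] {T : E →ₗ.[𝕜] E} (R : E →L[𝕜] E) (z : 𝕜)
    (hR : ∀ v : E, ∃ h : R v ∈ T.domain, T ⟨R v, h⟩ - z • R v = v)
    (hR' : ∀ x : T.domain, R (T x - z • (x : E)) = x) :
    T.IsClosed := by
  have hgraph : (T.graph : Set (E × E)) = {p | R (p.2 - z • p.1) = p.1} := by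
    ext ⟨v, w⟩
    simp only [SetLike.mem_coe, mem_graph_iff, Set.mem_ofPred_eq]
    constructor
    · rintro ⟨x, rfl, rfl⟩
      exact hR' x
    · intro hv
      obtain ⟨h, hTv⟩ := hR (w - z • v)
      refine ⟨⟨_, h⟩, hv, ?_⟩
      simpa [hv] using hTv
  show _root_.IsClosed (T.graph : Set (E × E))
  rw [hgraph]
  exact isClosed_eq (by fun_prop) (by fun_prop)

variable {𝕜 E : Type*} [RCLike 𝕜] [NormedAddCommGroup E] [InnerProductSpace 𝕜 E]
  [CompleteSpace E] {T S : E →ₗ.[𝕜] E} {z : 𝕜}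

/-- `ker (T† - conj z) = ran (T - z)ᗮ`, which vanishes when `T - z` is onto. -/
theorem eq_zero_of_adjoint_apply_eq_conj_smul (hT : Dense (T.domain : Set E))
    (hsurj : ∀ w : E, ∃ x : T.domain, T x - z • (x : E) = w)
    (y : T†.domain) (hy : T† y = conj z • (y : E)) : (y : E) = 0 := by
  obtain ⟨x, hx⟩ := hsurj y
  have h := adjoint_isFormalAdjoint hT y x
  rw [hy, inner_smul_left, RCLike.conj_conj] at h
  rw [← inner_self_eq_zero (𝕜 := 𝕜)]
  calc ⟪(y : E), (y : E)⟫_𝕜 = ⟪(y : E), T x - z • (x : E)⟫_𝕜 := by rw [hx]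
    _ = 0 := by rw [inner_sub_right, inner_smul_right, ← h, sub_self]

theorem adjoint_eq_of_isFormalAdjoint (hT : Dense (T.domain : Set E)) (h : T.IsFormalAdjoint S)
    (hsurj : ∀ w : E, ∃ x : T.domain, T x - z • (x : E) = w)
    (hsurj' : ∀ w : E, ∃ y : S.domain, S y - conj z • (y : E) = w) :
    T† = S := by
  have hle := h.le_adjoint hT
  refine (eq_of_le_of_domain_eq hle (le_antisymm hle.1 ?_)).symm
  intro y hy
  obtain ⟨y', hy'⟩ := hsurj' (T† ⟨y, hy⟩ - conj z • y)
  have hSy' : S y' = T† ⟨y', hle.1 y'.2⟩ := hle.2 rfl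
  have hdiff := eq_zero_of_adjoint_apply_eq_conj_smul hT hsurj
    (⟨y, hy⟩ - ⟨y', hle.1 y'.2⟩) (by
      rw [map_sub, ← hSy']
      simp only [Submodule.coe_sub, smul_sub]
      rw [sub_eq_sub_iff_sub_eq_sub, hy'])
  rw [Submodule.coe_sub, sub_eq_zero] at hdiff
  change y = y' at hdiff
  exact hdiff ▸ y'.2

end LinearPMap

section AntiDual

variable {G H : Type*} [NormedAddCommGroup G] [NormedSpace ℂ G]
  [NormedAddCommGroup H] [InnerProductSpace ℂ H]

@[simp] theorem toAntiDual_apply (e : G →L[ℂ] H) (v : H) (u : G) :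
    toAntiDual e v u = ⟪e u, v⟫_ℂ := rfl

@[simp] theorem adjointForm_apply (a : G →L[ℂ] AntiDual G) (v u : G) :
    adjointForm a v u = conj (a u v) := rfl

theorem toAntiDual_injective {e : G →L[ℂ] H} (hd : DenseRange e) :
    Function.Injective (toAntiDual e) := fun _ _ h =>
  hd.eq_of_inner_right ℂ fun u => congrArg (· u) h

theorem adjointForm_sub_smul_toAntiDual_comp (a : G →L[ℂ] AntiDual G) (e : G →L[ℂ] H) (z : ℂ) :
    adjointForm (a - z • (toAntiDual e).comp e) =
      adjointForm a - conj z • (toAntiDual e).comp e := by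
  ext v u
  simp

end AntiDual

/-- The operator `Ŝ` induced by `S` in `H`. -/
structure IsInducedOperator {G H : Type*} [NormedAddCommGroup G] [NormedSpace ℂ G]
    [NormedAddCommGroup H] [InnerProductSpace ℂ H]
    (e : G →L[ℂ] H) (S : G →L[ℂ] AntiDual G) (T : H →ₗ.[ℂ] H) : Prop where
  mem_domain_iff : ∀ v : H, v ∈ T.domain ↔ ∃ u : G, e u = v ∧ ∃ w : H, S u = toAntiDual e w
  apply_eq : ∀ (x : T.domain) (u : G), e u = (x : H) → S u = toAntiDual e (T x)

namespace IsInducedOperator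

variable {G H : Type*} [NormedAddCommGroup G] [NormedSpace ℂ G]
  [NormedAddCommGroup H] [InnerProductSpace ℂ H]
  {e : G →L[ℂ] H} {S : G →L[ℂ] AntiDual G} {T : H →ₗ.[ℂ] H}

theorem sub_smul_apply (hT : IsInducedOperator e S T) (z : ℂ) {x : T.domain} {u : G}
    (hu : e u = x) :
    (S - z • (toAntiDual e).comp e) u = toAntiDual e (T x - z • (x : H)) := by
  simp [hT.apply_eq x u hu, hu, map_sub, map_smul]

theorem mem_domain_of_sub_smul_apply_eq (hT : IsInducedOperator e S T) (z : ℂ) {u : G} {w : H}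
    (h : (S - z • (toAntiDual e).comp e) u = toAntiDual e w) : e u ∈ T.domain :=
  (hT.mem_domain_iff _).mpr ⟨u, rfl, w + z • e u, by rw [map_add, map_smul, ← h]; simp⟩

theorem preimage_domain_eq (hT : IsInducedOperator e S T) (z : ℂ) :
    e ⁻¹' T.domain = (S - z • (toAntiDual e).comp e) ⁻¹' Set.range (toAntiDual e) := by
  ext u
  constructor
  · intro h
    exact ⟨_, (hT.sub_smul_apply z (x := ⟨e u, h⟩) rfl).symm⟩
  · rintro ⟨w, hw⟩
    exact hT.mem_domain_of_sub_smul_apply_eq z hw.symm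

theorem exists_mem_domain_of_sub_smul_apply_eq (hT : IsInducedOperator e S T) (z : ℂ)
    (hd : DenseRange e) {u : G} {w : H}
    (h : (S - z • (toAntiDual e).comp e) u = toAntiDual e w) :
    ∃ hu : e u ∈ T.domain, T ⟨e u, hu⟩ - z • e u = w :=
  ⟨hT.mem_domain_of_sub_smul_apply_eq z h,
    toAntiDual_injective hd ((hT.sub_smul_apply z rfl).symm.trans h)⟩

theorem exists_sub_smul_eq (hT : IsInducedOperator e S T) (z : ℂ) (hd : DenseRange e)
    (hsurj : Function.Surjective (S - z • (toAntiDual e).comp e)) (w : H) :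
    ∃ x : T.domain, T x - z • (x : H) = w := by
  obtain ⟨u, hu⟩ := hsurj (toAntiDual e w)
  obtain ⟨h, hx⟩ := hT.exists_mem_domain_of_sub_smul_apply_eq z hd hu
  exact ⟨⟨e u, h⟩, hx⟩

theorem isFormalAdjoint {T' : H →ₗ.[ℂ] H} (hT : IsInducedOperator e S T)
    (hT' : IsInducedOperator e (adjointForm S) T') : T.IsFormalAdjoint T' := by
  intro x y
  obtain ⟨u, hu, -⟩ := (hT.mem_domain_iff x).mp x.2
  obtain ⟨v, hv, -⟩ := (hT'.mem_domain_iff y).mp y.2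
  have hx := congrArg (· v) (hT.apply_eq x u hu)
  have hy := congrArg (· u) (hT'.apply_eq y v hv)
  simp only [adjointForm_apply, toAntiDual_apply] at hx hy
  rw [← hu, ← hv, ← hy, hx, inner_conj_symm]

variable [CompleteSpace G]

/-- The resolvent is `e ∘ (S - z)⁻¹ ∘ toAntiDual e`, bounded by the bounded inverse theorem. -/
theorem exists_resolvent (hT : IsInducedOperator e S T) (z : ℂ) (hd : DenseRange e)
    (hbij : Function.Bijective (S - z • (toAntiDual e).comp e)) :
    ∃ R : H →L[ℂ] H, (∀ v : H, ∃ h : R v ∈ T.domain, T ⟨R v, h⟩ - z • R v = v) ∧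
      ∀ x : T.domain, R (T x - z • (x : H)) = x := by
  let A : G ≃L[ℂ] AntiDual G := .ofBijective (S - z • (toAntiDual e).comp e)
    (LinearMap.ker_eq_bot.mpr hbij.1) (LinearMap.range_eq_top.mpr hbij.2)
  refine ⟨e ∘L (A.symm : AntiDual G →L[ℂ] G) ∘L toAntiDual e, fun v => ?_, fun x => ?_⟩
  · exact hT.exists_mem_domain_of_sub_smul_apply_eq z hd (A.apply_symm_apply (toAntiDual e v))
  · obtain ⟨u, hu, -⟩ := (hT.mem_domain_iff x).mp x.2
    have hAu : A u = toAntiDual e (T x - z • (x : H)) := hT.sub_smul_apply z hu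
    simp only [coe_comp, Function.comp_apply, ContinuousLinearEquiv.coe_coe, ← hAu,
      ContinuousLinearEquiv.symm_apply_apply, hu]

end IsInducedOperator

section Riesz

open scoped InnerProduct

variable {G H : Type*} [NormedAddCommGroup G] [InnerProductSpace ℂ G] [CompleteSpace G]
  [NormedAddCommGroup H] [InnerProductSpace ℂ H]

theorem toAntiDual_id_bijective : Function.Bijective (toAntiDual (.id ℂ G)) := by
  refine ⟨toAntiDual_injective denseRange_id, fun ψ => ?_⟩
  obtain ⟨g, hg⟩ := (InnerProductSpace.toDual ℂ G).surjective
    (((starL ℂ : ℂ ≃L⋆[ℂ] ℂ) : ℂ →L⋆[ℂ] ℂ).comp ψ)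
  refine ⟨g, ContinuousLinearMap.ext fun u => ?_⟩
  have hgu : ⟪g, u⟫_ℂ = conj (ψ u) := DFunLike.congr_fun hg u
  rw [toAntiDual_apply, id_apply, ← inner_conj_symm, hgu, Complex.conj_conj]

def rieszAntiDual (G : Type*) [NormedAddCommGroup G] [InnerProductSpace ℂ G] [CompleteSpace G] :
    G ≃L[ℂ] AntiDual G :=
  .ofBijective (toAntiDual (.id ℂ G)) (LinearMap.ker_eq_bot.mpr toAntiDual_id_bijective.1)
    (LinearMap.range_eq_top.mpr toAntiDual_id_bijective.2)

@[simp] theorem rieszAntiDual_apply (g u : G) : rieszAntiDual G g u = ⟪u, g⟫_ℂ := rfl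

theorem adjointForm_eq_comp_adjoint (a : G →L[ℂ] AntiDual G) :
    adjointForm a = (rieszAntiDual G : G →L[ℂ] AntiDual G) ∘L
      (((rieszAntiDual G).symm : AntiDual G →L[ℂ] G) ∘L a)† := by
  ext v u
  rw [adjointForm_apply, coe_comp, Function.comp_apply, ContinuousLinearEquiv.coe_coe,
    rieszAntiDual_apply, adjoint_inner_right, ← inner_conj_symm, coe_comp,
    Function.comp_apply, ContinuousLinearEquiv.coe_coe, ← rieszAntiDual_apply,
    ContinuousLinearEquiv.apply_symm_apply]

theorem adjointForm_bijective {a : G →L[ℂ] AntiDual G} (ha : Function.Bijective a) :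
    Function.Bijective (adjointForm a) := by
  have hB : IsUnit (((rieszAntiDual G).symm : AntiDual G →L[ℂ] G) ∘L a) :=
    isUnit_iff_bijective.mpr ((rieszAntiDual G).symm.bijective.comp ha)
  rw [adjointForm_eq_comp_adjoint, coe_comp]
  exact (rieszAntiDual G).bijective.comp (isUnit_iff_bijective.mp hB.star)

variable [CompleteSpace H]

theorem toAntiDual_eq_comp_adjoint (e : G →L[ℂ] H) :
    toAntiDual e = (rieszAntiDual G : G →L[ℂ] AntiDual G) ∘L e† := by
  ext v u
  simp [adjoint_inner_right]

theorem denseRange_toAntiDual {e : G →L[ℂ] H} (he : Function.Injective e) :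
    DenseRange (toAntiDual e) := by
  have hadj : DenseRange (adjoint e) := by
    change Dense ((adjoint e).range : Set G)
    rw [Submodule.dense_iff_topologicalClosure_eq_top,
      Submodule.topologicalClosure_eq_top_iff, orthogonal_range, adjoint_adjoint,
      LinearMap.ker_eq_bot]
    exact he
  rw [toAntiDual_eq_comp_adjoint, coe_comp]
  exact (rieszAntiDual G).surjective.denseRange.comp hadj (rieszAntiDual G).continuous

end Riesz

theorem IsInducedOperator.dense_preimage_domain {G H : Type*} [NormedAddCommGroup G]
    [InnerProductSpace ℂ G] [CompleteSpace G] [NormedAddCommGroup H] [InnerProductSpace ℂ H]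
    [CompleteSpace H] {e : G →L[ℂ] H} {S : G →L[ℂ] AntiDual G} {T : H →ₗ.[ℂ] H}
    (hT : IsInducedOperator e S T) (z : ℂ)
    (he : Function.Injective e) (hbij : Function.Bijective (S - z • (toAntiDual e).comp e)) :
    Dense (e ⁻¹' T.domain) := by
  let A : G ≃L[ℂ] AntiDual G := .ofBijective (S - z • (toAntiDual e).comp e)
    (LinearMap.ker_eq_bot.mpr hbij.1) (LinearMap.range_eq_top.mpr hbij.2)
  rw [hT.preimage_domain_eq z]
  exact (denseRange_toAntiDual he).preimage A.toHomeomorph.isOpenMap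

/-- For a Gelfand triplet `G ⊂ H ⊂ G*` and `S ∈ B(G,G*)` with
`S − z : G → G*` bijective, the operator `Ŝ` induced by `S` in `H` is closed and densely
defined, `z` is in its resolvent set, its Hilbert-space adjoint is the operator induced by
the adjoint form `S*`, and the domains of `Ŝ` and `Ŝ*` are dense subspaces of `G`. -/
theorem stmt19 {G H : Type*} [NormedAddCommGroup G] [InnerProductSpace ℂ G] [CompleteSpace G]
    [NormedAddCommGroup H] [InnerProductSpace ℂ H] [CompleteSpace H]
    (e : G →L[ℂ] H) (he : Function.Injective ⇑e) (hd : DenseRange ⇑e)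
    (S : G →L[ℂ] AntiDual G) (z : ℂ)
    (hbij : Function.Bijective ⇑(S - z • (toAntiDual e).comp e))
    -- `T` is the operator `Ŝ` induced by `S` in `H`:
    (T : H →ₗ.[ℂ] H)
    (hTdom : ∀ v : H, v ∈ T.domain ↔ ∃ u : G, e u = v ∧ ∃ w : H, S u = toAntiDual e w)
    (hTact : ∀ (x : T.domain) (u : G), e u = (x : H) → S u = toAntiDual e (T x))
    -- `T'` is the operator induced by the adjoint form `S*` in `H`:
    (T' : H →ₗ.[ℂ] H)
    (hT'dom : ∀ v : H, v ∈ T'.domain ↔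
      ∃ u : G, e u = v ∧ ∃ w : H, adjointForm S u = toAntiDual e w)
    (hT'act : ∀ (x : T'.domain) (u : G), e u = (x : H) →
      adjointForm S u = toAntiDual e (T' x)) :
    T.IsClosed ∧
    Dense (T.domain : Set H) ∧
    (∃ R : H →L[ℂ] H,
      (∀ v : H, ∃ h : R v ∈ T.domain, T ⟨R v, h⟩ - z • R v = v) ∧
      (∀ x : T.domain, R (T x - z • (x : H)) = (x : H))) ∧
    T.adjoint = T' ∧
    Dense {u : G | e u ∈ T.domain} ∧
    Dense {u : G | e u ∈ T.adjoint.domain} := by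
  have hT : IsInducedOperator e S T := ⟨hTdom, hTact⟩
  have hT' : IsInducedOperator e (adjointForm S) T' := ⟨hT'dom, hT'act⟩
  have hbij' : Function.Bijective (adjointForm S - conj z • (toAntiDual e).comp e) := by
    rw [← adjointForm_sub_smul_toAntiDual_comp]
    exact adjointForm_bijective hbij
  have hdomG : Dense (e ⁻¹' T.domain) := hT.dense_preimage_domain z he hbij
  have hdom : Dense (T.domain : Set H) :=
    (hd.dense_image e.continuous hdomG).mono (Set.image_preimage_subset _ _)
  have hadj : T.adjoint = T' :=
    LinearPMap.adjoint_eq_of_isFormalAdjoint hdom (hT.isFormalAdjoint hT')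
      (hT.exists_sub_smul_eq z hd hbij.2) (hT'.exists_sub_smul_eq (conj z) hd hbij'.2)
  obtain ⟨R, hR, hR'⟩ := hT.exists_resolvent z hd hbij
  refine ⟨LinearPMap.isClosed_of_resolvent R z hR hR', hdom, ⟨R, hR, hR'⟩, hadj, hdomG, ?_⟩
  rw [hadj]
  exact hT'.dense_preimage_domain (conj z) he hbij'

end
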